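/- arXiv:1108.3494 — 2 statements merged into one kernel-verified Lean document; each statement's English description precedes it below -/
import Mathlib

section
/- For every natural number k ≥ 1, let n = 4k+2 and let g : {0,1}^n → {0,1} be the pattern function: g(x) = 1 iff there exists j ∈ [2k+1] such that x satisfies pattern P_j, where P_j requires x_{2j-1} = x_{2j} = 1 and, for all i ∈ [k], x_{2j+2i} = 0 and x_{2j-2i-1} = x_{2j-2i} = 0 (all indices taken modulo n). Then the 0-sensitivity of g equals 1, i.e., s_0(g) = 1. -/
section Defs

variable {ι : Type} [Fintype ι] [DecidableEq ι]

/-- `flipBit x i` is `x` with its `i`-th bit flipped. -/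
def flipBit (x : ι → Bool) (i : ι) : ι → Bool :=
  Function.update x i (!x i)

/-- `flipBlock x B` is `x` with all bits indexed by `B` flipped. -/
def flipBlock (x : ι → Bool) (B : Finset ι) : ι → Bool :=
  fun j => if j ∈ B then !x j else x j

/-- The sensitivity of `f` at `x`: the number of `i` with `f (x^(i)) ≠ f x`. -/
def sensAt (f : (ι → Bool) → Bool) (x : ι → Bool) : ℕ :=
  (Finset.univ.filter fun i => f (flipBit x i) ≠ f x).card

/-- The sensitivity `s(f) = max_x s(f,x)`. -/
def sens (f : (ι → Bool) → Bool) : ℕ :=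
  Finset.univ.sup (sensAt f)

/-- The 0-sensitivity `s₀(f) = max_{x : f x = 0} s(f,x)`. -/
def sens0 (f : (ι → Bool) → Bool) : ℕ :=
  (Finset.univ.filter fun x => f x = false).sup (sensAt f)

/-- The 1-sensitivity `s₁(f) = max_{x : f x = 1} s(f,x)`. -/
def sens1 (f : (ι → Bool) → Bool) : ℕ :=
  (Finset.univ.filter fun x => f x = true).sup (sensAt f)

/-- The block sensitivity of `f` at `x`: the largest `b` such that there are
`b` pairwise disjoint blocks on which flipping `x` changes the value of `f`. -/
noncomputable def bsAt (f : (ι → Bool) → Bool) (x : ι → Bool) : ℕ :=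
  sSup {b : ℕ | ∃ Bl : Fin b → Finset ι,
    (Pairwise fun p q => Disjoint (Bl p) (Bl q)) ∧
    ∀ p, f (flipBlock x (Bl p)) ≠ f x}

/-- The block sensitivity `bs(f) = max_x bs(f,x)`. -/
noncomputable def bs (f : (ι → Bool) → Bool) : ℕ :=
  Finset.univ.sup (bsAt f)

/-- The 0-block-sensitivity `bs₀(f) = max_{x : f x = 0} bs(f,x)`. -/
noncomputable def bs0 (f : (ι → Bool) → Bool) : ℕ :=
  (Finset.univ.filter fun x => f x = false).sup (bsAt f)

end Defs

/-- The coordinate of `{0,1}^{4k+2}` with (1-based) index `t`, taken modulo `4k+2`. -/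
def pidx (k : ℕ) (t : ℤ) : Fin (4*k+2) :=
  ⟨(t % (4*(k:ℤ)+2)).toNat, by
    have h0 : (0:ℤ) < 4*(k:ℤ)+2 := by positivity
    have h1 := Int.emod_nonneg t (ne_of_gt h0)
    have h2 := Int.emod_lt_of_pos t h0
    omega⟩

/-- `x` satisfies the pattern `P_j`: `x_{2j-1} = x_{2j} = 1` and, for all `i ∈ [k]`,
`x_{2j+2i} = 0` and `x_{2j-2i-1} = x_{2j-2i} = 0`, indices taken modulo `4k+2`. -/
def SatPat (k : ℕ) (j : ℤ) (x : Fin (4*k+2) → Bool) : Prop :=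
  x (pidx k (2*j-1)) = true ∧ x (pidx k (2*j)) = true ∧
  ∀ i : ℤ, 1 ≤ i → i ≤ (k:ℤ) →
    x (pidx k (2*j+2*i)) = false ∧
    x (pidx k (2*j-2*i-1)) = false ∧
    x (pidx k (2*j-2*i)) = false


/-!
A zero input `x` with two sensitive coordinates `i ≠ i'` would give patterns `P_j`, `P_j'` with
`x^(i) ∈ P_j` and `x^(i') ∈ P_j'`. Since `x^(i)` and `x^(i')` differ in at most two coordinates,
while two distinct patterns (indices `j ≢ j'` modulo `2k+1`) contradict each other in three
coordinates, the two patterns coincide; but then every coordinate fixed by the pattern is left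
untouched by one of the two flips, so `x` itself would satisfy it. The input with a single one,
at coordinate `1`, attains sensitivity `1`: flipping coordinate `2` creates `P_1`.
-/

section Sensitivity

variable {ι : Type} [Fintype ι] [DecidableEq ι] {f : (ι → Bool) → Bool}

theorem sens0_le_one (h : ∀ x, f x = false → ∀ i i',
      f (flipBit x i) = true → f (flipBit x i') = true → i = i') :
    sens0 f ≤ 1 := by
  refine Finset.sup_le fun x hx => Finset.card_le_one.mpr fun i hi i' hi' => ?_
  simp only [Finset.mem_filter, Finset.mem_univ, true_and] at hx hi hi'
  rw [hx, ne_eq, Bool.not_eq_false] at hi hi'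
  exact h x hx i i' hi hi'

theorem one_le_sens0 {x : ι → Bool} {i : ι} (hx : f x = false) (hi : f (flipBit x i) = true) :
    1 ≤ sens0 f := by
  have hx' : x ∈ Finset.univ.filter fun x => f x = false := by simpa using hx
  refine le_trans ?_ (Finset.le_sup (f := sensAt f) hx')
  refine Finset.card_pos.mpr ⟨i, Finset.mem_filter.mpr ⟨Finset.mem_univ i, ?_⟩⟩
  rw [hi, hx]
  decide

end Sensitivity

section FlipBit

variable {ι : Type} [DecidableEq ι]

theorem flipBit_apply_of_ne (x : ι → Bool) {i c : ι} (h : c ≠ i) : flipBit x i c = x c :=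
  Function.update_of_ne h _ _

theorem flipBit_apply_eq_or_flipBit_apply_eq (x : ι → Bool) {i i' : ι} (h : i ≠ i') (c : ι) :
    flipBit x i c = x c ∨ flipBit x i' c = x c := by
  by_cases hc : c = i
  · exact .inr (flipBit_apply_of_ne x (hc ▸ h))
  · exact .inl (flipBit_apply_of_ne x hc)

theorem hammingDist_flipBit_flipBit_le [Fintype ι] (x : ι → Bool) (i i' : ι) :
    hammingDist (flipBit x i) (flipBit x i') ≤ 2 := by
  unfold hammingDist
  refine (Finset.card_le_card (t := {i, i'}) fun c hc => ?_).trans Finset.card_le_two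
  by_contra hc'
  simp only [Finset.mem_insert, Finset.mem_singleton, not_or] at hc'
  simp only [Finset.mem_filter, flipBit_apply_of_ne x hc'.1, flipBit_apply_of_ne x hc'.2] at hc
  exact hc.2 rfl

end FlipBit

section Pattern

variable {k : ℕ}

theorem pidx_eq_pidx_iff {a b : ℤ} : pidx k a = pidx k b ↔ (4*(k:ℤ)+2) ∣ a - b := by
  have hn : (4*(k:ℤ)+2) ≠ 0 := by positivity
  have ha := Int.emod_nonneg a hn
  have hb := Int.emod_nonneg b hn
  rw [Fin.ext_iff, ← Int.modEq_iff_dvd, Int.ModEq]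
  simp only [pidx]
  omega

theorem pidx_ne_pidx {a b : ℤ} (h : a ≠ b) (hab : (a - b).natAbs < 4*k+2) :
    pidx k a ≠ pidx k b := fun he =>
  h (by have := Int.eq_zero_of_dvd_of_natAbs_lt_natAbs (pidx_eq_pidx_iff.mp he) (by omega); omega)

theorem SatPat.of_dvd_sub {j j' : ℤ} {x : Fin (4*k+2) → Bool} (h : (2*(k:ℤ)+1) ∣ j - j')
    (hx : SatPat k j' x) : SatPat k j x := by
  obtain ⟨m, hm⟩ := h
  have shift : ∀ a b, a - b = 2*(j - j') → pidx k a = pidx k b := fun a b hab =>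
    pidx_eq_pidx_iff.mpr ⟨m, by rw [hab, hm]; ring⟩
  refine ⟨?_, ?_, fun i hi hik => ⟨?_, ?_, ?_⟩⟩
  · convert hx.1 using 2; exact shift _ _ (by ring)
  · convert hx.2.1 using 2; exact shift _ _ (by ring)
  · convert (hx.2.2 i hi hik).1 using 2; exact shift _ _ (by ring)
  · convert (hx.2.2 i hi hik).2.1 using 2; exact shift _ _ (by ring)
  · convert (hx.2.2 i hi hik).2.2 using 2; exact shift _ _ (by ring)

theorem SatPat.of_forall_eq_or_eq {j : ℤ} {x y z : Fin (4*k+2) → Bool}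
    (hy : SatPat k j y) (hz : SatPat k j z) (h : ∀ c, y c = x c ∨ z c = x c) :
    SatPat k j x := by
  have agree : ∀ c v, y c = v → z c = v → x c = v := fun c v hyc hzc =>
    (h c).elim (fun e => e ▸ hyc) (fun e => e ▸ hzc)
  exact ⟨agree _ _ hy.1 hz.1, agree _ _ hy.2.1 hz.2.1, fun i hi hik =>
    ⟨agree _ _ (hy.2.2 i hi hik).1 (hz.2.2 i hi hik).1,
     agree _ _ (hy.2.2 i hi hik).2.1 (hz.2.2 i hi hik).2.1,
     agree _ _ (hy.2.2 i hi hik).2.2 (hz.2.2 i hi hik).2.2⟩⟩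

/-- `P_{j'+d}` asks for ones at `2j'+2d` and zeros at `2j'-1, 2j'`, where `P_{j'}` asks for the
opposite. -/
theorem two_lt_hammingDist_of_satPat {j j' d : ℤ} {y z : Fin (4*k+2) → Bool}
    (hd : 1 ≤ d) (hdk : d ≤ k) (hjj' : (2*(k:ℤ)+1) ∣ j - j' - d)
    (hy : SatPat k j y) (hz : SatPat k j' z) : 2 < hammingDist y z := by
  obtain ⟨m, hm⟩ := hjj'
  have shift : ∀ a b, a - b = 2*(j - j' - d) → pidx k a = pidx k b := fun a b hab =>
    pidx_eq_pidx_iff.mpr ⟨m, by rw [hab, hm]; ring⟩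
  have one : y (pidx k (2*j' + 2*d)) = true := by
    rw [← shift (2*j) _ (by ring)]; exact hy.2.1
  have zero : y (pidx k (2*j')) = false := by
    rw [← shift (2*j - 2*d) _ (by ring)]; exact (hy.2.2 d hd hdk).2.2
  have zero' : y (pidx k (2*j' - 1)) = false := by
    rw [← shift (2*j - 2*d - 1) _ (by ring)]; exact (hy.2.2 d hd hdk).2.1
  refine Finset.two_lt_card.mpr
    ⟨pidx k (2*j' + 2*d), ?_, pidx k (2*j'), ?_, pidx k (2*j' - 1), ?_,
      pidx_ne_pidx (by omega) (by omega), pidx_ne_pidx (by omega) (by omega),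
      pidx_ne_pidx (by omega) (by omega)⟩
  all_goals simp only [Finset.mem_filter, Finset.mem_univ, true_and]
  · rw [one, (hz.2.2 d hd hdk).1]; decide
  · rw [zero, hz.2.1]; decide
  · rw [zero', hz.1]; decide

theorem dvd_sub_or_exists_dvd_sub_sub (j j' : ℤ) :
    (2*(k:ℤ)+1) ∣ j - j' ∨
      (∃ d : ℤ, 1 ≤ d ∧ d ≤ k ∧ (2*(k:ℤ)+1) ∣ j - j' - d) ∨
      ∃ d : ℤ, 1 ≤ d ∧ d ≤ k ∧ (2*(k:ℤ)+1) ∣ j' - j - d := by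
  have hn : (0:ℤ) < 2*k+1 := by positivity
  set r := (j - j') % (2*k+1)
  have hr0 := Int.emod_nonneg (j - j') hn.ne'
  have hrn := Int.emod_lt_of_pos (j - j') hn
  obtain ⟨m, hm⟩ : (2*(k:ℤ)+1) ∣ j - j' - r := Int.dvd_self_sub_of_emod_eq rfl
  rcases eq_or_ne r 0 with h | h
  · exact .inl ⟨m, by rw [← hm, h, sub_zero]⟩
  rcases le_or_gt r k with h' | h'
  · exact .inr (.inl ⟨r, by omega, h', m, hm⟩)
  · exact .inr (.inr ⟨2*k+1 - r, by omega, by omega, -m - 1, by linear_combination -hm⟩)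

theorem eq_of_satPat_flipBit {j j' : ℤ} {x : Fin (4*k+2) → Bool} {i i' : Fin (4*k+2)}
    (hx : ¬ SatPat k j x) (hi : SatPat k j (flipBit x i)) (hi' : SatPat k j' (flipBit x i')) :
    i = i' := by
  by_contra hii
  have hdist := hammingDist_flipBit_flipBit_le x i i'
  rcases dvd_sub_or_exists_dvd_sub_sub j j' with h | ⟨d, hd, hdk, h⟩ | ⟨d, hd, hdk, h⟩
  · exact hx (hi.of_forall_eq_or_eq (hi'.of_dvd_sub h)
      (flipBit_apply_eq_or_flipBit_apply_eq x hii))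
  · have := two_lt_hammingDist_of_satPat hd hdk h hi hi'
    omega
  · have := two_lt_hammingDist_of_satPat hd hdk h hi' hi
    rw [hammingDist_comm] at this
    omega

theorem not_satPat_of_eq_true_iff {j : ℤ} {x : Fin (4*k+2) → Bool} {p : Fin (4*k+2)}
    (hx : ∀ c, x c = true ↔ c = p) : ¬ SatPat k j x := fun h =>
  pidx_ne_pidx (k := k) (a := 2*j-1) (b := 2*j) (by omega) (by omega)
    (((hx _).mp h.1).trans ((hx _).mp h.2.1).symm)

theorem satPat_of_eq_true_iff {j : ℤ} {x : Fin (4*k+2) → Bool}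
    (hx : ∀ c, x c = true ↔ c = pidx k (2*j-1) ∨ c = pidx k (2*j)) : SatPat k j x := by
  have zero : ∀ c, c ≠ pidx k (2*j-1) → c ≠ pidx k (2*j) → x c = false := fun c h h' => by
    simpa [h, h'] using hx c
  refine ⟨(hx _).mpr (.inl rfl), (hx _).mpr (.inr rfl), fun i hi hik =>
    ⟨zero _ ?_ ?_, zero _ ?_ ?_, zero _ ?_ ?_⟩⟩ <;> exact pidx_ne_pidx (by omega) (by omega)

end Pattern

theorem sens0_pattern_function_general (k : ℕ)
    (g : (Fin (4*k+2) → Bool) → Bool)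
    (hg : ∀ x, g x = true ↔ ∃ j : ℤ, 1 ≤ j ∧ j ≤ 2*(k:ℤ)+1 ∧ SatPat k j x) :
    sens0 g = 1 := by
  refine le_antisymm (sens0_le_one fun x hx i i' hi hi' => ?_) ?_
  · obtain ⟨j, hj, hjk, hxi⟩ := (hg _).mp hi
    obtain ⟨j', -, -, hxi'⟩ := (hg _).mp hi'
    refine eq_of_satPat_flipBit (fun hxj => ?_) hxi hxi'
    simpa [hx] using (hg x).mpr ⟨j, hj, hjk, hxj⟩
  · set y : Fin (4*k+2) → Bool := fun c => decide (c = pidx k 1)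
    have hy : g y = false := Bool.eq_false_iff.mpr fun h => by
      obtain ⟨j, -, -, hj⟩ := (hg y).mp h
      exact not_satPat_of_eq_true_iff (fun c => decide_eq_true_iff) hj
    have h21 : pidx k 2 ≠ pidx k 1 := pidx_ne_pidx (by omega) (by omega)
    refine one_le_sens0 (i := pidx k 2) hy
      ((hg _).mpr ⟨1, le_rfl, by omega, satPat_of_eq_true_iff fun c => ?_⟩)
    by_cases hc : c = pidx k 2 <;> simp [flipBit, y, hc, h21]

/-- For `k ≥ 1`, the pattern function `g` on `{0,1}^{4k+2}` (with `g x = 1` iff `x`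
satisfies some pattern `P_j`, `j ∈ [2k+1]`) has 0-sensitivity `s₀(g) = 1`. -/
theorem sens0_pattern_function (k : ℕ) (hk : 1 ≤ k)
    (g : (Fin (4*k+2) → Bool) → Bool)
    (hg : ∀ x, g x = true ↔ ∃ j : ℤ, 1 ≤ j ∧ j ≤ 2*(k:ℤ)+1 ∧ SatPat k j x) :
    sens0 g = 1 :=
  sens0_pattern_function_general k g hg
end

section
/- Let g : {0,1}^m → {0,1} be a Boolean function with s_0(g) = 1, and let f be the OR of n = s_1(g) disjoint copies of g, i.e., f(x_{1,1},…,x_{n,m}) = ⋁_{i=1}^{n} g(x_{i,1},…,x_{i,m}). Then bs_0(f) = s_1(g) · bs_0(g) ≤ s_1(g) · ((2/3)·s_1(g) + 1). -/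
/-!
Since `s₀(g) = 1`, a 0-input of `g` has at most one sensitive bit. Consequently, if `w` is a
1-input and `S` a set of bits, `g (w^S) = 1` when `S` contains no sensitive bit of `w`, and
`g (w^S) = 0` when it contains one or two of them: otherwise some 0-input on the way would have
two sensitive bits.

Take a 0-input `x` of `g` and pairwise disjoint minimal sensitive blocks `B₁, …, B_b` at `x`,
and let `t p q` be the number of sensitive bits of `x^{B_p}` inside `B_q`. Minimality gives
`t p p = |B_p| ≥ 1`, and disjointness gives `∑_q t p q ≤ s₁(g)`. Comparing the two readings
`x^{B_p ∪ B_q} = (x^{B_p})^{B_q} = (x^{B_q})^{B_p}` of one point through the dichotomy above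
forces `t p q + t q p ≥ 3` for `p ≠ q`. Summing over `p` and `q` yields `3b ≤ 2 s₁(g) + 1`.

For the OR `f` of `n` copies of `g`, every sensitive block of `f` at a 0-input switches on some
copy, so the blocks split into `n` families of sensitive blocks of `g`; conversely, `n` copies
of an optimal block family of `g` are sensitive for `f`. Hence `bs₀(f) = n · bs₀(g)`.
-/

open Finset

lemma Finset.sum_card_inter_le_card {ι α : Type*} [DecidableEq ι] [Fintype α]
    (Bl : α → Finset ι) (hdisj : Pairwise fun p q => Disjoint (Bl p) (Bl q)) (T : Finset ι) :
    ∑ q, #(Bl q ∩ T) ≤ #T := by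
  rw [← card_biUnion fun p _ q _ hpq => (hdisj hpq).mono inter_subset_left inter_subset_left]
  exact card_le_card (biUnion_subset.2 fun q _ => inter_subset_right)

lemma Finset.disjoint_erase_of_inter_eq_singleton {α : Type*} [DecidableEq α] {S T : Finset α}
    {a : α} (hST : S ∩ T = {a}) : Disjoint (S.erase a) T := by
  rw [disjoint_iff_inter_eq_empty, erase_inter, hST, erase_singleton]

lemma three_mul_card_le_of_sum_le {α : Type*} [Fintype α] (t : α → α → ℕ) (s : ℕ)
    (hdiag : ∀ p, 1 ≤ t p p) (hpair : ∀ p q, p ≠ q → 3 ≤ t p q + t q p)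
    (hrow : ∀ p, ∑ q, t p q ≤ s) : 3 * Fintype.card α ≤ 2 * s + 1 := by
  classical
  set b := Fintype.card α
  have hcol : ∀ p, 3 * b ≤ ∑ q, (t p q + t q p) + 1 := fun p => by
    have hoff : 3 * (b - 1) ≤ ∑ q ∈ univ.erase p, (t p q + t q p) := by
      simpa [card_erase_of_mem, mul_comm] using
        card_nsmul_le_sum (univ.erase p) _ 3 fun q hq => hpair p q (ne_of_mem_erase hq).symm
    have := hdiag p
    have hb : 1 ≤ b := Fintype.card_pos_iff.2 ⟨p⟩
    rw [← add_sum_erase _ _ (mem_univ p)]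
    omega
  have htotal : b * (3 * b) ≤ b * (2 * s + 1) := calc
    b * (3 * b) ≤ ∑ p, (∑ q, (t p q + t q p) + 1) := by
      simpa using card_nsmul_le_sum univ _ _ fun p _ => hcol p
    _ = 2 * ∑ p, ∑ q, t p q + b := by
      simp only [sum_add_distrib, sum_comm (f := fun p q => t q p), sum_const, card_univ,
        smul_eq_mul, mul_one]
      ring
    _ ≤ b * (2 * s + 1) := by
      have := sum_le_sum fun p (_ : p ∈ univ) => hrow p
      simp only [sum_const, card_univ, smul_eq_mul] at this
      nlinarith
  rcases Nat.eq_zero_or_pos b with hb | hb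
  · omega
  · exact Nat.le_of_mul_le_mul_left htotal hb

section Flip

variable {ι : Type} [DecidableEq ι]

lemma flipBlock_empty (x : ι → Bool) : flipBlock x ∅ = x := by
  funext j; simp [flipBlock]

lemma flipBlock_flipBlock (x : ι → Bool) (A B : Finset ι) :
    flipBlock (flipBlock x A) B = flipBlock x (symmDiff A B) := by
  funext j
  by_cases hA : j ∈ A <;> by_cases hB : j ∈ B <;> simp [flipBlock, mem_symmDiff, hA, hB]

lemma flipBlock_flipBlock_of_disjoint (x : ι → Bool) {A B : Finset ι} (h : Disjoint A B) :
    flipBlock (flipBlock x A) B = flipBlock x (A ∪ B) := by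
  rw [flipBlock_flipBlock, h.symmDiff_eq_sup, sup_eq_union]

lemma flipBit_eq_flipBlock (x : ι → Bool) (i : ι) : flipBit x i = flipBlock x {i} := by
  funext j
  by_cases h : j = i
  · subst h; simp [flipBit, flipBlock]
  · simp [flipBit, flipBlock, h]

lemma flipBit_flipBlock_of_mem (x : ι → Bool) {S : Finset ι} {i : ι} (h : i ∈ S) :
    flipBit (flipBlock x S) i = flipBlock x (S.erase i) := by
  rw [flipBit_eq_flipBlock, flipBlock_flipBlock]
  congr 1
  ext j
  by_cases hj : j = i <;> simp [mem_symmDiff, hj, h]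

lemma flipBit_flipBlock_of_notMem (x : ι → Bool) {S : Finset ι} {i : ι} (h : i ∉ S) :
    flipBit (flipBlock x S) i = flipBlock x (insert i S) := by
  rw [flipBit_eq_flipBlock, flipBlock_flipBlock_of_disjoint x (disjoint_singleton_right.2 h),
    union_comm, ← insert_eq]

lemma flipBlock_flipBlock_comm (x : ι → Bool) {B C : Finset ι} (hBC : Disjoint B C) :
    flipBlock (flipBlock x B) C = flipBlock (flipBlock x C) B := by
  rw [flipBlock_flipBlock_of_disjoint x hBC, flipBlock_flipBlock_of_disjoint x hBC.symm,
    union_comm]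

lemma nonempty_of_minimal {g : (ι → Bool) → Bool} {x : ι → Bool} (hx : g x = false)
    {B : Finset ι} (hB : Minimal (fun S => g (flipBlock x S) = true) B) : B.Nonempty := by
  rw [nonempty_iff_ne_empty]
  rintro rfl
  have := hB.prop
  simp only [flipBlock_empty] at this
  simp [hx] at this

end Flip

section BlockSensitivity

variable {ι : Type} [Fintype ι] [DecidableEq ι] (f : (ι → Bool) → Bool) (x : ι → Bool)

def sensitiveBlockCounts : Set ℕ := {b : ℕ | ∃ Bl : Fin b → Finset ι,
    (Pairwise fun p q => Disjoint (Bl p) (Bl q)) ∧ ∀ p, f (flipBlock x (Bl p)) ≠ f x}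

lemma bddAbove_sensitiveBlockCounts : BddAbove (sensitiveBlockCounts f x) := by
  refine ⟨Fintype.card ι, fun b ⟨Bl, hdisj, hflip⟩ => ?_⟩
  have hne : ∀ p, (Bl p).Nonempty := fun p =>
    nonempty_iff_ne_empty.2 fun h => hflip p (by rw [h, flipBlock_empty])
  choose el hel using hne
  have hinj : Function.Injective el := fun p q hpq => by
    by_contra hpq'
    exact disjoint_left.1 (hdisj hpq') (hel p) (hpq ▸ hel q)
  simpa using Fintype.card_le_of_injective el hinj

lemma bsAt_mem_sensitiveBlockCounts : bsAt f x ∈ sensitiveBlockCounts f x :=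
  Nat.sSup_mem ⟨0, Fin.elim0, fun p => p.elim0, fun p => p.elim0⟩
    (bddAbove_sensitiveBlockCounts f x)

lemma card_le_bsAt {α : Type*} [Fintype α] (Bl : α → Finset ι)
    (hdisj : Pairwise fun p q => Disjoint (Bl p) (Bl q))
    (hflip : ∀ p, f (flipBlock x (Bl p)) ≠ f x) : Fintype.card α ≤ bsAt f x := by
  let e := (Fintype.equivFin α).symm
  exact le_csSup (bddAbove_sensitiveBlockCounts f x)
    ⟨Bl ∘ e, fun p q hpq => hdisj (e.injective.ne hpq), fun p => hflip (e p)⟩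

def sensSet : Finset ι :=
  univ.filter fun i => f (flipBit x i) ≠ f x

lemma sensAt_eq_card_sensSet : sensAt f x = #(sensSet f x) := rfl

variable {f x}

lemma mem_sensSet_of_eq_true (hx : f x = true) {u : ι} :
    u ∈ sensSet f x ↔ f (flipBit x u) = false := by
  simp [sensSet, hx]

lemma bsAt_le_bs0 (hx : f x = false) : bsAt f x ≤ bs0 f :=
  le_sup (f := bsAt f) (by simpa using hx)

lemma sensAt_le_sens0 (hx : f x = false) : sensAt f x ≤ sens0 f :=
  le_sup (f := sensAt f) (by simpa using hx)

lemma sensAt_le_sens1 (hx : f x = true) : sensAt f x ≤ sens1 f :=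
  le_sup (f := sensAt f) (by simpa using hx)

end BlockSensitivity

section SensZeroLeOne

variable {ι : Type} [Fintype ι] [DecidableEq ι] {g : (ι → Bool) → Bool}

lemma eq_of_flipBit_eq_true (hg : sens0 g ≤ 1) {z : ι → Bool} (hz : g z = false) {i j : ι}
    (hi : g (flipBit z i) = true) (hj : g (flipBit z j) = true) : i = j := by
  have hcard : #(sensSet g z) ≤ 1 := sensAt_eq_card_sensSet g z ▸ (sensAt_le_sens0 hz).trans hg
  exact card_le_one.1 hcard i (by simp [sensSet, hz, hi]) j (by simp [sensSet, hz, hj])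

lemma flipBlock_eq_true_of_disjoint (hg : sens0 g ≤ 1) {w : ι → Bool} (hw : g w = true)
    {S : Finset ι} (hS : Disjoint S (sensSet g w)) : g (flipBlock w S) = true := by
  induction S using Finset.strongInduction with
  | H S ih =>
    rcases S.eq_empty_or_nonempty with rfl | hne
    · rwa [flipBlock_empty]
    obtain ⟨u, rfl⟩ | ⟨u, hu, v, hv, huv⟩ := hne.exists_eq_singleton_or_nontrivial
    · rw [← flipBit_eq_flipBlock, ← Bool.not_eq_false, ← mem_sensSet_of_eq_true hw]
      exact disjoint_left.1 hS (mem_singleton_self u)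
    -- were `w^S` a 0-input, both `u` and `v` would be sensitive there
    have hflip : ∀ a ∈ S, g (flipBit (flipBlock w S) a) = true := fun a ha => by
      rw [flipBit_flipBlock_of_mem w ha]
      exact ih _ (erase_ssubset ha) (hS.mono_left (erase_subset a S))
    by_contra hfalse
    exact huv (eq_of_flipBit_eq_true hg (Bool.not_eq_true _ ▸ hfalse)
      (hflip u hu) (hflip v hv))

lemma flipBlock_insert_eq_false (hg : sens0 g ≤ 1) {w : ι → Bool} (hw : g w = true)
    {h : ι} (hh : h ∈ sensSet g w) {S : Finset ι} (hS : Disjoint S (sensSet g w)) :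
    g (flipBlock w (insert h S)) = false := by
  induction S using Finset.induction_on with
  | empty => rwa [insert_empty, ← flipBit_eq_flipBlock, ← mem_sensSet_of_eq_true hw]
  | insert u S hu ih =>
    have huS : Disjoint S (sensSet g w) := hS.mono_left (subset_insert u S)
    have hus : u ∉ sensSet g w := disjoint_left.1 hS (mem_insert_self u S)
    have hhS : h ∉ S := fun h' => disjoint_left.1 huS h' hh
    have hz := ih huS
    have hflip_h : g (flipBit (flipBlock w (insert h S)) h) = true := by
      rw [flipBit_flipBlock_of_mem w (mem_insert_self h S), erase_insert hhS]
      exact flipBlock_eq_true_of_disjoint hg hw huS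
    by_contra htrue
    have hflip_u : g (flipBit (flipBlock w (insert h S)) u) = true := by
      rw [flipBit_flipBlock_of_notMem w (by simp [hu, Ne.symm (ne_of_mem_of_not_mem hh hus)]),
        insert_comm]
      simpa using htrue
    exact ne_of_mem_of_not_mem hh hus (eq_of_flipBit_eq_true hg hz hflip_h hflip_u)

lemma flipBlock_insert_insert_eq_false (hg : sens0 g ≤ 1) {w : ι → Bool} (hw : g w = true)
    {h₁ h₂ : ι} (hh₁ : h₁ ∈ sensSet g w) (hh₂ : h₂ ∈ sensSet g w) (hne : h₁ ≠ h₂)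
    {S : Finset ι} (hS : Disjoint S (sensSet g w)) :
    g (flipBlock w (insert h₂ (insert h₁ S))) = false := by
  have hh₁S : h₁ ∉ S := fun h => disjoint_left.1 hS h hh₁
  have hh₂S : h₂ ∉ insert h₁ S := by
    rw [mem_insert, not_or]
    exact ⟨hne.symm, fun h => disjoint_left.1 hS h hh₂⟩
  have hz := flipBlock_insert_eq_false hg hw hh₁ hS
  have hflip₁ : g (flipBit (flipBlock w (insert h₁ S)) h₁) = true := by
    rw [flipBit_flipBlock_of_mem w (mem_insert_self h₁ S), erase_insert hh₁S]
    exact flipBlock_eq_true_of_disjoint hg hw hS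
  by_contra htrue
  have hflip₂ : g (flipBit (flipBlock w (insert h₁ S)) h₂) = true := by
    rw [flipBit_flipBlock_of_notMem w hh₂S]
    simpa using htrue
  exact hne (eq_of_flipBit_eq_true hg hz hflip₁ hflip₂)

lemma flipBlock_eq_false_of_card_inter_sensSet (hg : sens0 g ≤ 1) {w : ι → Bool}
    (hw : g w = true) {S : Finset ι} (h₁ : 1 ≤ #(S ∩ sensSet g w))
    (h₂ : #(S ∩ sensSet g w) ≤ 2) : g (flipBlock w S) = false := by
  have hS : Disjoint (S \ sensSet g w) (sensSet g w) := sdiff_disjoint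
  have hsplit : S = S \ sensSet g w ∪ S ∩ sensSet g w := (sdiff_union_inter S _).symm
  obtain hone | htwo : #(S ∩ sensSet g w) = 1 ∨ #(S ∩ sensSet g w) = 2 := by omega
  · obtain ⟨h, hh⟩ := card_eq_one.1 hone
    have hmem : h ∈ sensSet g w := (mem_inter.1 (hh ▸ mem_singleton_self h)).2
    rw [hsplit, hh, union_comm, ← insert_eq]
    exact flipBlock_insert_eq_false hg hw hmem hS
  · obtain ⟨h₁, h₂, hne, hh⟩ := card_eq_two.1 htwo
    have hmem : ∀ a ∈ S ∩ sensSet g w, a ∈ sensSet g w := fun a ha => (mem_inter.1 ha).2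
    rw [hsplit, hh, union_comm, insert_union, ← insert_eq, insert_comm]
    exact flipBlock_insert_insert_eq_false hg hw (hmem h₁ (hh ▸ by simp))
      (hmem h₂ (hh ▸ by simp)) hne hS

variable {x : ι → Bool} {B C : Finset ι}

lemma subset_sensSet_of_minimal (hB : Minimal (fun S => g (flipBlock x S) = true) B) :
    B ⊆ sensSet g (flipBlock x B) := fun u hu => by
  rw [mem_sensSet_of_eq_true hB.prop, flipBit_flipBlock_of_mem x hu]
  simpa using hB.not_prop_of_lt (erase_ssubset hu)

lemma flipBlock_eq_true_iff_card_inter_sensSet_eq_zero (hg : sens0 g ≤ 1) {w : ι → Bool}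
    (hw : g w = true) {S : Finset ι} (h₂ : #(S ∩ sensSet g w) ≤ 2) :
    g (flipBlock w S) = true ↔ #(S ∩ sensSet g w) = 0 := by
  refine ⟨fun htrue => ?_, fun h₀ => ?_⟩
  · by_contra h₀
    have := flipBlock_eq_false_of_card_inter_sensSet hg hw (by omega) h₂
    simp_all
  · exact flipBlock_eq_true_of_disjoint hg hw
      (disjoint_iff_inter_eq_empty.2 (card_eq_zero.1 h₀))

lemma not_disjoint_sensSet_and_disjoint_sensSet (hg : sens0 g ≤ 1) (hx : g x = false)
    (hB : Minimal (fun S => g (flipBlock x S) = true) B)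
    (hC : Minimal (fun S => g (flipBlock x S) = true) C) (hBC : Disjoint B C) :
    ¬ (Disjoint C (sensSet g (flipBlock x B)) ∧ Disjoint B (sensSet g (flipBlock x C))) := by
  rintro ⟨hCB, hBC'⟩
  obtain ⟨t, ht⟩ := nonempty_of_minimal hx hC
  have hfalse := flipBlock_insert_eq_false hg hC.prop (subset_sensSet_of_minimal hC ht) hBC'
  have htrue := flipBlock_eq_true_of_disjoint hg hB.prop (hCB.mono_left (erase_subset t C))
  -- both points are `x` flipped on `B ∪ C.erase t`
  have hpt : flipBlock (flipBlock x C) (insert t B) = flipBlock (flipBlock x B) (C.erase t) := by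
    rw [flipBlock_flipBlock, flipBlock_flipBlock]
    congr 1
    ext j
    by_cases hjB : j ∈ B
    · simp [mem_symmDiff, hjB, disjoint_left.1 hBC hjB]
    · by_cases hjt : j = t
      · subst hjt; simp [mem_symmDiff, hjB, ht]
      · simp [mem_symmDiff, hjB, hjt]
  rw [hpt, htrue] at hfalse
  exact Bool.noConfusion hfalse

lemma not_inter_sensSet_eq_singleton_and_eq_singleton (hg : sens0 g ≤ 1)
    (hB : Minimal (fun S => g (flipBlock x S) = true) B)
    (hC : Minimal (fun S => g (flipBlock x S) = true) C) (hBC : Disjoint B C) {h e : ι}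
    (hh : C ∩ sensSet g (flipBlock x B) = {h}) (he : B ∩ sensSet g (flipBlock x C) = {e}) :
    False := by
  have hhC : h ∈ C := (mem_inter.1 (hh ▸ mem_singleton_self h)).1
  have heB : e ∈ B := (mem_inter.1 (he ▸ mem_singleton_self e)).1
  have hy := flipBlock_eq_false_of_card_inter_sensSet hg hB.prop (S := C) (by simp [hh])
    (by simp [hh])
  have hflip_h : g (flipBit (flipBlock (flipBlock x B) C) h) = true := by
    rw [flipBit_flipBlock_of_mem _ hhC]
    exact flipBlock_eq_true_of_disjoint hg hB.prop (disjoint_erase_of_inter_eq_singleton hh)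
  have hflip_e : g (flipBit (flipBlock (flipBlock x B) C) e) = true := by
    rw [flipBlock_flipBlock_comm x hBC, flipBit_flipBlock_of_mem _ heB]
    exact flipBlock_eq_true_of_disjoint hg hC.prop (disjoint_erase_of_inter_eq_singleton he)
  exact disjoint_left.1 hBC heB (eq_of_flipBit_eq_true hg hy hflip_h hflip_e ▸ hhC)

lemma three_le_card_inter_sensSet_add (hg : sens0 g ≤ 1) (hx : g x = false)
    (hB : Minimal (fun S => g (flipBlock x S) = true) B)
    (hC : Minimal (fun S => g (flipBlock x S) = true) C) (hBC : Disjoint B C) :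
    3 ≤ #(C ∩ sensSet g (flipBlock x B)) + #(B ∩ sensSet g (flipBlock x C)) := by
  by_contra! hlt
  have hiff := (flipBlock_eq_true_iff_card_inter_sensSet_eq_zero hg hB.prop (S := C)
    (by omega)).symm.trans ((flipBlock_flipBlock_comm x hBC).symm ▸
      flipBlock_eq_true_iff_card_inter_sensSet_eq_zero hg hC.prop (S := B) (by omega))
  by_cases h₀ : #(C ∩ sensSet g (flipBlock x B)) = 0
  · exact not_disjoint_sensSet_and_disjoint_sensSet hg hx hB hC hBC
      ⟨disjoint_iff_inter_eq_empty.2 (card_eq_zero.1 h₀),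
        disjoint_iff_inter_eq_empty.2 (card_eq_zero.1 (hiff.1 h₀))⟩
  · obtain ⟨h, hh⟩ := card_eq_one.1 (show #(C ∩ sensSet g (flipBlock x B)) = 1 by omega)
    obtain ⟨e, he⟩ := card_eq_one.1 (show #(B ∩ sensSet g (flipBlock x C)) = 1 by omega)
    exact not_inter_sensSet_eq_singleton_and_eq_singleton hg hB hC hBC hh he

lemma three_mul_bsAt_le (hg : sens0 g ≤ 1) (hx : g x = false) :
    3 * bsAt g x ≤ 2 * sens1 g + 1 := by
  obtain ⟨Bl, hdisj, hflip⟩ := bsAt_mem_sensitiveBlockCounts g x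
  have hBl : ∀ p, g (flipBlock x (Bl p)) = true := by simpa [hx] using hflip
  choose M hMBl hM using fun p => exists_minimal_le_of_wellFoundedLT
    (fun S => g (flipBlock x S) = true) _ (hBl p)
  have hMdisj : Pairwise fun p q => Disjoint (M p) (M q) :=
    fun p q hpq => (hdisj hpq).mono (hMBl p) (hMBl q)
  simpa using three_mul_card_le_of_sum_le
    (fun p q => #(M q ∩ sensSet g (flipBlock x (M p)))) (sens1 g)
    (fun p => by
      rw [inter_eq_left.2 (subset_sensSet_of_minimal (hM p))]
      exact card_pos.2 (nonempty_of_minimal hx (hM p)))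
    (fun p q hpq => three_le_card_inter_sensSet_add hg hx (hM p) (hM q) (hMdisj hpq))
    (fun p => (sum_card_inter_le_card M hMdisj _).trans
      (sensAt_eq_card_sensSet g _ ▸ sensAt_le_sens1 (hM p).prop))

lemma three_mul_bs0_le (hg : sens0 g ≤ 1) : 3 * bs0 g ≤ 2 * sens1 g + 1 := by
  rw [bs0, apply_sup_eq_sup_comp_of_linearOrder (3 * ·) (fun _ _ h => Nat.mul_le_mul_left 3 h)
    rfl]
  exact Finset.sup_le fun x hx => three_mul_bsAt_le hg (by simpa using hx)

end SensZeroLeOne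

section Composition

variable {κ ι : Type} {g : (ι → Bool) → Bool} {f : (κ × ι → Bool) → Bool}

lemma eq_false_iff_forall_slice (hf : ∀ x, f x = true ↔ ∃ i, g (fun j => x (i, j)) = true)
    (x : κ × ι → Bool) : f x = false ↔ ∀ i, g (fun j => x (i, j)) = false := by
  simpa using (hf x).not

variable [DecidableEq κ] [Fintype ι] [DecidableEq ι]

lemma flipBlock_slice (x : κ × ι → Bool) (B : Finset (κ × ι)) (i : κ) :
    (fun j => flipBlock x B (i, j)) = flipBlock (fun j => x (i, j)) {j | (i, j) ∈ B} := by
  funext j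
  simp [flipBlock]

variable [Fintype κ]

lemma card_mul_bsAt_le_bs0 (hf : ∀ x, f x = true ↔ ∃ i, g (fun j => x (i, j)) = true)
    {y : ι → Bool} (hy : g y = false) : Fintype.card κ * bsAt g y ≤ bs0 f := by
  obtain ⟨Bl, hdisj, hflip⟩ := bsAt_mem_sensitiveBlockCounts g y
  let X : κ × ι → Bool := fun z => y z.2
  have hX : f X = false := (eq_false_iff_forall_slice hf X).2 fun _ => hy
  have hdisj' : Pairwise fun r s : κ × Fin (bsAt g y) =>
      Disjoint ({r.1} ×ˢ Bl r.2) ({s.1} ×ˢ Bl s.2) := fun r s hrs => by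
    change Disjoint _ _
    rw [disjoint_product, disjoint_singleton]
    by_cases h₁ : r.1 = s.1
    · exact Or.inr (hdisj fun h₂ => hrs (Prod.ext h₁ h₂))
    · exact Or.inl h₁
  have hflip' : ∀ r : κ × Fin (bsAt g y), f (flipBlock X ({r.1} ×ˢ Bl r.2)) ≠ f X := fun r => by
    rw [hX, ne_eq, Bool.not_eq_false, hf]
    refine ⟨r.1, ?_⟩
    rw [flipBlock_slice]
    simpa [hy, X] using hflip r.2
  calc Fintype.card κ * bsAt g y = Fintype.card (κ × Fin (bsAt g y)) := by simp
    _ ≤ bsAt f X := card_le_bsAt f X _ hdisj' hflip'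
    _ ≤ bs0 f := bsAt_le_bs0 hX

lemma bsAt_le_card_mul_bs0 (hf : ∀ x, f x = true ↔ ∃ i, g (fun j => x (i, j)) = true)
    {x : κ × ι → Bool} (hx : f x = false) : bsAt f x ≤ Fintype.card κ * bs0 g := by
  obtain ⟨Bl, hdisj, hflip⟩ := bsAt_mem_sensitiveBlockCounts f x
  choose I hI using fun p => (hf _).1 (by simpa [hx] using hflip p)
  have hfiber : ∀ i, #{p | I p = i} ≤ bs0 g := fun i => calc
    #{p | I p = i} = Fintype.card {p // I p = i} := (Fintype.card_subtype _).symm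
    _ ≤ bsAt g (fun j => x (i, j)) := by
      refine card_le_bsAt _ _ (fun p => {j | (i, j) ∈ Bl p.1}) (fun p q hpq => ?_) fun p => ?_
      · exact disjoint_left.2 fun j hp hq => disjoint_left.1
          (hdisj (Subtype.coe_injective.ne hpq)) (by simpa using hp) (by simpa using hq)
      · obtain ⟨p, rfl⟩ := p
        rw [← flipBlock_slice, hI, (eq_false_iff_forall_slice hf x).1 hx]
        decide
    _ ≤ bs0 g := bsAt_le_bs0 ((eq_false_iff_forall_slice hf x).1 hx i)
  calc bsAt f x = ∑ i, #{p | I p = i} := by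
        simpa using card_eq_sum_card_fiberwise fun p (_ : p ∈ univ) => mem_univ (I p)
    _ ≤ ∑ _i : κ, bs0 g := sum_le_sum fun i _ => hfiber i
    _ = Fintype.card κ * bs0 g := by simp

lemma bs0_eq_card_mul_bs0 (hf : ∀ x, f x = true ↔ ∃ i, g (fun j => x (i, j)) = true) :
    bs0 f = Fintype.card κ * bs0 g := by
  refine le_antisymm (Finset.sup_le fun x hx => bsAt_le_card_mul_bs0 hf (by simpa using hx)) ?_
  unfold bs0
  rw [apply_sup_eq_sup_comp_of_linearOrder (Fintype.card κ * ·)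
    (fun _ _ h => Nat.mul_le_mul_left _ h) (mul_zero _)]
  exact Finset.sup_le fun y hy => card_mul_bsAt_le_bs0 hf (by simpa using hy)

end Composition

theorem bs0_composed_le_of_sens0_eq_one_general {m : ℕ} (g : (Fin m → Bool) → Bool)
    (hs0 : sens0 g = 1)
    (f : (Fin (sens1 g) × Fin m → Bool) → Bool)
    (hf : ∀ x : Fin (sens1 g) × Fin m → Bool,
      f x = true ↔ ∃ i : Fin (sens1 g), g (fun j => x (i, j)) = true) :
    bs0 f = sens1 g * bs0 g ∧ 3 * bs0 f ≤ sens1 g * (2 * sens1 g + 3) := by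
  have hbs : bs0 f = sens1 g * bs0 g := by simpa using bs0_eq_card_mul_bs0 hf
  refine ⟨hbs, ?_⟩
  rw [hbs, mul_left_comm]
  exact Nat.mul_le_mul_left _ ((three_mul_bs0_le hs0.le).trans (by omega))

/-- If `g : {0,1}^m → {0,1}` (attaining both values) has `s₀(g) = 1`, and `f` is the OR
of `n = s₁(g)` disjoint copies of `g`, then `bs₀(f) = s₁(g)·bs₀(g) ≤ s₁(g)·((2/3)·s₁(g)+1)`,
the inequality being stated over ℕ as `3·bs₀(f) ≤ s₁(g)·(2·s₁(g)+3)`. -/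
theorem bs0_composed_le_of_sens0_eq_one {m : ℕ} (g : (Fin m → Bool) → Bool)
    (hg0 : ∃ y, g y = false) (hg1 : ∃ y, g y = true)
    (hs0 : sens0 g = 1)
    (f : (Fin (sens1 g) × Fin m → Bool) → Bool)
    (hf : ∀ x : Fin (sens1 g) × Fin m → Bool,
      f x = true ↔ ∃ i : Fin (sens1 g), g (fun j => x (i, j)) = true) :
    bs0 f = sens1 g * bs0 g ∧ 3 * bs0 f ≤ sens1 g * (2 * sens1 g + 3) :=
  bs0_composed_le_of_sens0_eq_one_general g hs0 f hf
end
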